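/- Let n ≥ 1, ν ≥ 0, r > n/2, and let m be a continuous function on ℝ^{2n}∖{0} with A := sup_{k∈ℤ} ‖m_k^ν‖_{W^{(r,r),2}(ℝ^{2n})} < ∞. Then there is a constant C = C(n, r, Ψ) such that |m(ξ,η)| ≤ C·A·(|ξ|+|η|)^{−ν} for all (ξ,η) ≠ 0. -/

import Mathlib

open MeasureTheory Complex
open scoped ENNReal NNReal

noncomputable section

abbrev Euc (d : ℕ) : Type := EuclideanSpace ℝ (Fin d)

/-- The Fourier transform `𝓕f(ξ) = ∫ f(x) e^{−i x·ξ} dx`. -/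
def FT {d : ℕ} (f : Euc d → ℂ) (ξ : Euc d) : ℂ :=
  ∫ x : Euc d, Complex.exp (-(Complex.I * ((inner ℝ x ξ : ℝ) : ℂ))) * f x

/-- The fractional derivative `D^s f(x) = (2π)^{-d} ∫ |ξ|^s 𝓕f(ξ) e^{i x·ξ} dξ`. -/
def Dfrac {d : ℕ} (s : ℝ) (f : Euc d → ℂ) (x : Euc d) : ℂ :=
  ((((2 * Real.pi) ^ d)⁻¹ : ℝ) : ℂ) *
    ∫ ξ : Euc d, ((‖ξ‖ ^ s : ℝ) : ℂ) * Complex.exp (Complex.I * ((inner ℝ x ξ : ℝ) : ℂ)) * FT f ξ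

/-- The `L^p` quasinorm `(∫ F^p)^{1/p}` of an `ℝ≥0∞`-valued function on `ℝ^d`. -/
def LpQ {d : ℕ} (p : ℝ) (F : Euc d → ℝ≥0∞) : ℝ≥0∞ :=
  (∫⁻ x : Euc d, F x ^ p) ^ (1 / p)

/-- Pointwise extended-nonnegative norm of a complex-valued function. -/
def nn {α : Type*} (f : α → ℂ) : α → ℝ≥0∞ := fun x => (‖f x‖₊ : ℝ≥0∞)

/-- The bilinear multiplier operator
`T_m(f,g)(x) = ∫∫ m(ξ,η) e^{i x·(ξ+η)} 𝓕f(ξ) 𝓕g(η) dξ dη`. -/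
def Tm {d : ℕ} (m : Euc d × Euc d → ℂ) (f g : Euc d → ℂ) (x : Euc d) : ℂ :=
  ∫ ξη : Euc d × Euc d,
    m ξη * Complex.exp (Complex.I * ((inner ℝ x (ξη.1 + ξη.2) : ℝ) : ℂ)) * FT f ξη.1 * FT g ξη.2

/-- `D^s T_m(f,g)(x) = ∫∫ |ξ+η|^s m(ξ,η) e^{i x·(ξ+η)} 𝓕f(ξ) 𝓕g(η) dξ dη`. -/
def DsTm {d : ℕ} (s : ℝ) (m : Euc d × Euc d → ℂ) (f g : Euc d → ℂ) (x : Euc d) : ℂ :=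
  ∫ ξη : Euc d × Euc d,
    ((‖ξη.1 + ξη.2‖ ^ s : ℝ) : ℂ) * m ξη *
      Complex.exp (Complex.I * ((inner ℝ x (ξη.1 + ξη.2) : ℝ) : ℂ)) * FT f ξη.1 * FT g ξη.2

/-- The seminorm `‖Φ‖_{(ν,K)} = max_{|β|+|γ| ≤ K} sup_{(ξ,η) ≠ 0}
(|ξ|+|η|)^{|β|+|γ|-ν} |∂^β_ξ ∂^γ_η Φ(ξ,η)|` (formulated with total iterated
derivatives on `ℝ^{2d} ∖ {0}`). -/
def phiSeminorm {d : ℕ} (ν : ℝ) (K : ℕ) (Φ : Euc d × Euc d → ℂ) : ℝ≥0∞ :=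
  ⨆ (j : ℕ) (_ : j ≤ K) (ξη : Euc d × Euc d) (_ : ξη ≠ 0),
    ENNReal.ofReal
      ((‖ξη.1‖ + ‖ξη.2‖) ^ ((j : ℝ) - ν) *
        ‖iteratedFDerivWithin ℝ j Φ {(0 : Euc d × Euc d)}ᶜ ξη‖)

/-- The Fourier transform on `ℝ^{2d}` (viewed as `ℝ^d × ℝ^d`). -/
def FT2 {d : ℕ} (h : Euc d × Euc d → ℂ) (xy : Euc d × Euc d) : ℂ :=
  ∫ ξη : Euc d × Euc d,
    Complex.exp (-(Complex.I * (((inner ℝ ξη.1 xy.1 : ℝ) + (inner ℝ ξη.2 xy.2 : ℝ) : ℝ) : ℂ))) * h ξη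

/-- The product Sobolev norm `‖h‖_{W^{(r₁,r₂),2}}`. -/
def sobW {d : ℕ} (r₁ r₂ : ℝ) (h : Euc d × Euc d → ℂ) : ℝ≥0∞ :=
  (∫⁻ xy : Euc d × Euc d,
      ENNReal.ofReal ((1 + ‖xy.1‖ ^ 2) ^ r₁ * (1 + ‖xy.2‖ ^ 2) ^ r₂) *
        (‖FT2 h xy‖₊ : ℝ≥0∞) ^ (2 : ℝ)) ^ ((1 : ℝ) / 2)

/-- `m_k^ν(ξ,η) = 2^{kν} m(2^k ξ, 2^k η) Ψ(ξ,η)`. -/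
def mPiece {d : ℕ} (Ψ : Euc d × Euc d → ℂ) (m : Euc d × Euc d → ℂ) (ν : ℝ) (k : ℤ) :
    Euc d × Euc d → ℂ :=
  fun ξη => ((((2 : ℝ) ^ ((k : ℝ) * ν)) : ℝ) : ℂ) * m ((2 : ℝ) ^ k • ξη) * Ψ ξη

/-- `ℝ^{n+1}` split as `ℝ_t × ℝ^n_x`: the point with first coordinate `t` and remaining
coordinates `x`. -/
def ap (n : ℕ) (t : ℝ) (x : Euc n) : Euc (n + 1) :=
  (EuclideanSpace.equiv (Fin (n + 1)) ℝ).symm (Fin.cons t (EuclideanSpace.equiv (Fin n) ℝ x))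

/-- The mixed Lebesgue quasinorm `(∫_ℝ (∫_{ℝ^n} F^q dx)^{p/q} dt)^{1/p}` of an
`ℝ≥0∞`-valued function on `ℝ^{n+1}`. -/
def MixQ (n : ℕ) (p q : ℝ) (F : Euc (n + 1) → ℝ≥0∞) : ℝ≥0∞ :=
  (∫⁻ t : ℝ, (∫⁻ x : Euc n, F (ap n t x) ^ q) ^ (p / q)) ^ (1 / p)

/-- The Hardy–Littlewood maximal function. -/
def HLM {d : ℕ} (h : Euc d → ℝ≥0∞) (x : Euc d) : ℝ≥0∞ :=
  ⨆ (ρ : ℝ) (_ : 0 < ρ),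
    (volume (Metric.ball x ρ))⁻¹ * ∫⁻ y in Metric.ball x ρ, h y

/-!
By Fourier inversion, `|h(p)| ≤ (2π)^{-2n} ‖FT2 h‖_{L¹}`, and Cauchy–Schwarz against the weight
`(1+|x|²)^r (1+|y|²)^r` bounds `‖FT2 h‖_{L¹}` by `‖h‖_{W^{(r,r),2}}` times `∫ (1+|x|²)^{-r} dx`,
which is finite because `r > n/2`. So every piece satisfies `|m_k^ν| ≤ C A`.
At a point `(ξ,η) ≠ 0` at most three scales `k` have `Ψ(2^{-k}(ξ,η)) ≠ 0`, all of them with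
`2^k ≳ |ξ| + |η|`, and for these `m(ξ,η) Ψ(2^{-k}(ξ,η)) = 2^{-kν} m_k^ν(2^{-k}(ξ,η))`;
summing the partition of unity gives `|m(ξ,η)| ≲ A (|ξ|+|η|)^{-ν}`.
-/

open scoped FourierTransform Real

theorem enorm_le_lintegral_enorm_fourier {V : Type*} [NormedAddCommGroup V]
    [InnerProductSpace ℝ V] [MeasurableSpace V] [BorelSpace V] [FiniteDimensional ℝ V]
    {f : V → ℂ} (hf : Integrable f) {v : V} (hv : ContinuousAt f v) :
    ‖f v‖ₑ ≤ ∫⁻ w, ‖𝓕 f w‖ₑ := by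
  by_cases hfin : ∫⁻ w, ‖𝓕 f w‖ₑ = ⊤
  · exact hfin ▸ le_top
  have hFf : Integrable (𝓕 f) :=
    ⟨(VectorFourier.fourierIntegral_continuous Real.continuous_fourierChar
      (innerSL ℝ).continuous₂ hf).aestronglyMeasurable, Ne.lt_top hfin⟩
  rw [← hf.fourierInv_fourier_eq hFf hv, Real.fourierInv_eq]
  refine (enorm_integral_le_lintegral_enorm _).trans_eq (lintegral_congr fun w => ?_)
  rw [← ofReal_norm, ← ofReal_norm, Circle.norm_smul]

theorem lintegral_le_weighted_sq_mul_inv {α : Type*} [MeasurableSpace α] (μ : Measure α)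
    {a g : α → ℝ≥0∞} (ha : Measurable a) (hg : AEMeasurable g μ)
    (ha0 : ∀ x, a x ≠ 0) (hatop : ∀ x, a x ≠ ⊤) :
    ∫⁻ x, g x ∂μ ≤ (∫⁻ x, a x * g x ^ (2 : ℝ) ∂μ) ^ (1 / 2 : ℝ) *
      (∫⁻ x, (a x)⁻¹ ∂μ) ^ (1 / 2 : ℝ) := by
  have hprod : ∀ x, a x ^ (1 / 2 : ℝ) * g x * a x ^ (-1 / 2 : ℝ) = g x := fun x => by
    rw [mul_comm (a x ^ _), mul_assoc, ← ENNReal.rpow_add _ _ (ha0 x) (hatop x)]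
    norm_num
  have hleft : ∀ x, (a x ^ (1 / 2 : ℝ) * g x) ^ (2 : ℝ) = a x * g x ^ (2 : ℝ) := fun x => by
    rw [ENNReal.mul_rpow_of_nonneg _ _ (by norm_num), ← ENNReal.rpow_mul]
    norm_num
  have hright : ∀ x, (a x ^ (-1 / 2 : ℝ)) ^ (2 : ℝ) = (a x)⁻¹ := fun x => by
    rw [← ENNReal.rpow_mul]
    norm_num
    exact ENNReal.rpow_neg_one _
  have key := ENNReal.lintegral_mul_le_Lp_mul_Lq μ .two_two
    (((ha.pow_const (1 / 2 : ℝ)).aemeasurable).mul hg) (ha.pow_const (-1 / 2 : ℝ)).aemeasurable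
  simpa only [Pi.mul_apply, hprod, hleft, hright] using key

/- `WithLp 2 (Euc d × Euc d)` is `ℝ^{2d}` as an inner product space, where Mathlib's `𝓕`
(kernel `e^{-2πi⟨x,w⟩}`) and Fourier inversion live. -/
theorem fourier_comp_ofLp_eq_FT2 {d : ℕ} (h : Euc d × Euc d → ℂ)
    (w : WithLp 2 (Euc d × Euc d)) :
    𝓕 (fun z : WithLp 2 (Euc d × Euc d) => h (WithLp.ofLp z)) w =
      FT2 h (WithLp.ofLp ((2 * π) • w)) := by
  rw [Real.fourier_eq', FT2,
    ← (WithLp.volume_preserving_symm_measurableEquiv_toLp_prod _ _).integral_comp']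
  congr 1 with z
  simp only [MeasurableEquiv.toLp_symm_apply, WithLp.prod_inner_apply, WithLp.ofLp_smul,
    Prod.smul_fst, Prod.smul_snd, inner_smul_right, smul_eq_mul]
  push_cast
  ring_nf

theorem finrank_withLp_prod_euc (d : ℕ) :
    Module.finrank ℝ (WithLp 2 (Euc d × Euc d)) = d + d := by
  rw [(WithLp.linearEquiv 2 ℝ (Euc d × Euc d)).finrank_eq, Module.finrank_prod,
    finrank_euclideanSpace_fin]

theorem lintegral_enorm_fourier_comp_ofLp {d : ℕ} (h : Euc d × Euc d → ℂ) :
    ∫⁻ w, ‖𝓕 (fun z : WithLp 2 (Euc d × Euc d) => h (WithLp.ofLp z)) w‖ₑ =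
      ENNReal.ofReal ((2 * π) ^ (d + d))⁻¹ * ∫⁻ xy, ‖FT2 h xy‖ₑ := by
  have h2π : (2 * π : ℝ) ≠ 0 := by positivity
  simp_rw [fourier_comp_ofLp_eq_FT2]
  calc ∫⁻ w, ‖FT2 h (WithLp.ofLp ((2 * π) • w))‖ₑ
      = ∫⁻ z : WithLp 2 (Euc d × Euc d), ‖FT2 h (WithLp.ofLp z)‖ₑ
          ∂Measure.map ((2 * π) • ·) volume :=
        (lintegral_map_equiv (μ := volume)
          (fun z : WithLp 2 (Euc d × Euc d) => ‖FT2 h (WithLp.ofLp z)‖ₑ)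
          (Homeomorph.smulOfNeZero (α := WithLp 2 (Euc d × Euc d)) _ h2π).toMeasurableEquiv).symm
    _ = _ := by
      rw [Measure.map_addHaar_smul _ h2π, lintegral_smul_measure, finrank_withLp_prod_euc,
        abs_of_pos (by positivity), smul_eq_mul]
      exact congrArg _ ((WithLp.volume_preserving_ofLp (Euc d) (Euc d)).lintegral_comp_emb
          (MeasurableEquiv.toLp 2 _).symm.measurableEmbedding (fun xy => ‖FT2 h xy‖ₑ))

theorem integrable_comp_ofLp {d : ℕ} {h : Euc d × Euc d → ℂ} (hh : Integrable h) :
    Integrable fun z : WithLp 2 (Euc d × Euc d) => h (WithLp.ofLp z) :=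
  (WithLp.volume_preserving_ofLp (Euc d) (Euc d)).integrable_comp_emb
    (MeasurableEquiv.toLp 2 _).symm.measurableEmbedding |>.2 hh

theorem continuous_FT2 {d : ℕ} {h : Euc d × Euc d → ℂ} (hh : Integrable h) :
    Continuous (FT2 h) := by
  have hFT2 : FT2 h = fun xy => 𝓕 (fun z : WithLp 2 (Euc d × Euc d) => h (WithLp.ofLp z))
      ((2 * π)⁻¹ • WithLp.toLp 2 xy) := by
    ext xy
    rw [fourier_comp_ofLp_eq_FT2, smul_inv_smul₀ (by positivity), WithLp.ofLp_toLp]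
  rw [hFT2]
  exact (VectorFourier.fourierIntegral_continuous Real.continuous_fourierChar
    (innerSL ℝ).continuous₂ (integrable_comp_ofLp hh)).comp (by fun_prop)

def invWeightIntegral (d : ℕ) (r : ℝ) : ℝ≥0∞ :=
  ∫⁻ x : Euc d, ENNReal.ofReal ((1 + ‖x‖ ^ 2) ^ (-r))

theorem invWeightIntegral_ne_top {d : ℕ} {r : ℝ} (hr : (d : ℝ) / 2 < r) :
    invWeightIntegral d r ≠ ⊤ := by
  have hdim : (Module.finrank ℝ (Euc d) : ℝ) < 2 * r := by
    rw [finrank_euclideanSpace_fin]; linarith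
  have hint := integrable_rpow_neg_one_add_norm_sq (E := Euc d) (μ := volume) hdim
  rw [show -(2 * r) / 2 = -r by ring] at hint
  exact hint.lintegral_lt_top.ne

theorem lintegral_enorm_FT2_le {d : ℕ} (r₁ r₂ : ℝ) {h : Euc d × Euc d → ℂ}
    (hh : AEMeasurable (FT2 h)) :
    ∫⁻ xy, ‖FT2 h xy‖ₑ ≤
      sobW r₁ r₂ h * (invWeightIntegral d r₁ * invWeightIntegral d r₂) ^ (1 / 2 : ℝ) := by
  set a : Euc d × Euc d → ℝ≥0∞ := fun xy =>
    ENNReal.ofReal ((1 + ‖xy.1‖ ^ 2) ^ r₁ * (1 + ‖xy.2‖ ^ 2) ^ r₂)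
  have ha_pos : ∀ xy : Euc d × Euc d, 0 < (1 + ‖xy.1‖ ^ 2) ^ r₁ * (1 + ‖xy.2‖ ^ 2) ^ r₂ :=
    fun xy => by positivity
  have ha_inv : ∀ xy, (a xy)⁻¹ =
      ENNReal.ofReal ((1 + ‖xy.1‖ ^ 2) ^ (-r₁)) * ENNReal.ofReal ((1 + ‖xy.2‖ ^ 2) ^ (-r₂)) :=
    fun xy => by
      rw [← ENNReal.ofReal_inv_of_pos (ha_pos xy), mul_inv, ← Real.rpow_neg (by positivity),
        ← Real.rpow_neg (by positivity), ENNReal.ofReal_mul (by positivity)]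
  have hinv : ∫⁻ xy, (a xy)⁻¹ = invWeightIntegral d r₁ * invWeightIntegral d r₂ := by
    simp_rw [ha_inv]
    rw [Measure.volume_eq_prod]
    exact lintegral_prod_mul (f := fun x : Euc d => ENNReal.ofReal ((1 + ‖x‖ ^ 2) ^ (-r₁)))
      (g := fun y : Euc d => ENNReal.ofReal ((1 + ‖y‖ ^ 2) ^ (-r₂))) (by fun_prop) (by fun_prop)
  have hsob : (∫⁻ xy, a xy * ‖FT2 h xy‖ₑ ^ (2 : ℝ)) ^ (1 / 2 : ℝ) = sobW r₁ r₂ h := rfl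
  rw [← hinv, ← hsob]
  exact lintegral_le_weighted_sq_mul_inv _ (by fun_prop) hh.enorm
    (fun xy => (ENNReal.ofReal_pos.2 (ha_pos xy)).ne') (fun _ => ENNReal.ofReal_ne_top)

def sobolevConst (d : ℕ) (r₁ r₂ : ℝ) : ℝ≥0∞ :=
  ENNReal.ofReal ((2 * π) ^ (d + d))⁻¹ *
    (invWeightIntegral d r₁ * invWeightIntegral d r₂) ^ (1 / 2 : ℝ)

theorem sobolevConst_ne_top {d : ℕ} {r₁ r₂ : ℝ} (hr₁ : (d : ℝ) / 2 < r₁)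
    (hr₂ : (d : ℝ) / 2 < r₂) : sobolevConst d r₁ r₂ ≠ ⊤ :=
  ENNReal.mul_ne_top ENNReal.ofReal_ne_top <| ENNReal.rpow_ne_top_of_nonneg (by norm_num) <|
    ENNReal.mul_ne_top (invWeightIntegral_ne_top hr₁) (invWeightIntegral_ne_top hr₂)

theorem enorm_le_sobolevConst_mul_sobW {d : ℕ} (r₁ r₂ : ℝ) {h : Euc d × Euc d → ℂ}
    (hh : Integrable h) {p : Euc d × Euc d} (hp : ContinuousAt h p) :
    ‖h p‖ₑ ≤ sobolevConst d r₁ r₂ * sobW r₁ r₂ h := by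
  have hHp : ContinuousAt (fun z : WithLp 2 (Euc d × Euc d) => h (WithLp.ofLp z))
      (WithLp.toLp 2 p) := hp.comp (by fun_prop)
  calc ‖h p‖ₑ ≤ ∫⁻ w, ‖𝓕 (fun z : WithLp 2 (Euc d × Euc d) => h (WithLp.ofLp z)) w‖ₑ :=
        enorm_le_lintegral_enorm_fourier (integrable_comp_ofLp hh) hHp
    _ = ENNReal.ofReal ((2 * π) ^ (d + d))⁻¹ * ∫⁻ xy, ‖FT2 h xy‖ₑ :=
        lintegral_enorm_fourier_comp_ofLp h
    _ ≤ sobolevConst d r₁ r₂ * sobW r₁ r₂ h := by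
        rw [sobolevConst, mul_assoc, mul_comm (_ ^ _)]
        gcongr
        exact lintegral_enorm_FT2_le r₁ r₂ (continuous_FT2 hh).aemeasurable

/- The product `Euc d × Euc d` carries the sup norm; `WithLp.toLp 2` gives the Euclidean norm
`|(ξ,η)|` of the paper. -/
def dyadicAnnulus (d : ℕ) : Set (Euc d × Euc d) :=
  {v | 1 / 2 ≤ ‖WithLp.toLp 2 v‖ ∧ ‖WithLp.toLp 2 v‖ ≤ 2}

theorem dyadicAnnulus_eq (d : ℕ) : dyadicAnnulus d = {ξη : Euc d × Euc d |
    1 / 2 ≤ Real.sqrt (‖ξη.1‖ ^ 2 + ‖ξη.2‖ ^ 2) ∧ Real.sqrt (‖ξη.1‖ ^ 2 + ‖ξη.2‖ ^ 2) ≤ 2} := by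
  simp only [dyadicAnnulus, WithLp.prod_norm_eq_of_L2]
  rfl

theorem zero_notMem_dyadicAnnulus (d : ℕ) : (0 : Euc d × Euc d) ∉ dyadicAnnulus d := by
  simp [dyadicAnnulus]

theorem isCompact_dyadicAnnulus (d : ℕ) : IsCompact (dyadicAnnulus d) := by
  have hc : Continuous fun v : Euc d × Euc d => ‖WithLp.toLp 2 v‖ :=
    (WithLp.prod_continuous_toLp 2 _ _).norm
  refine Metric.isCompact_of_isClosed_isBounded
    ((isClosed_le continuous_const hc).inter (isClosed_le hc continuous_const))
    ((Metric.isBounded_closedBall (x := 0) (r := 2)).subset fun v hv => ?_)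
  rw [Metric.mem_closedBall, dist_zero_right, Prod.norm_def]
  exact max_le ((WithLp.norm_fst_le (x := WithLp.toLp 2 v)).trans hv.2)
    ((WithLp.norm_snd_le (x := WithLp.toLp 2 v)).trans hv.2)

theorem norm_fst_add_norm_snd_le {d : ℕ} (v : Euc d × Euc d) :
    ‖v.1‖ + ‖v.2‖ ≤ √2 * ‖WithLp.toLp 2 v‖ := by
  rw [WithLp.prod_norm_eq_of_L2, ← Real.sqrt_mul zero_le_two]
  refine Real.le_sqrt_of_sq_le ?_
  simp only [WithLp.toLp_fst, WithLp.toLp_snd]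
  nlinarith [sq_nonneg (‖v.1‖ - ‖v.2‖)]

theorem norm_mem_Icc_of_zpow_neg_smul_mem_dyadicAnnulus {d : ℕ} {v : Euc d × Euc d} {k : ℤ}
    (hk : (2 : ℝ) ^ (-k) • v ∈ dyadicAnnulus d) :
    ‖WithLp.toLp 2 v‖ ∈ Set.Icc ((2 : ℝ) ^ (k - 1)) ((2 : ℝ) ^ (k + 1)) := by
  have h2k : (0 : ℝ) < 2 ^ k := by positivity
  obtain ⟨hlo, hhi⟩ := hk
  rw [WithLp.toLp_smul, norm_smul, Real.norm_of_nonneg (by positivity), zpow_neg,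
    ← div_eq_inv_mul] at hlo hhi
  rw [zpow_sub₀ two_ne_zero, zpow_add₀ two_ne_zero, zpow_one]
  constructor
  · rw [le_div_iff₀ h2k] at hlo; linarith
  · rw [div_le_iff₀ h2k] at hhi; linarith

theorem inv_two_rpow_le_of_smul_mem_dyadicAnnulus {d : ℕ} {ν : ℝ} (hν : 0 ≤ ν)
    {v : Euc d × Euc d} (hv : v ≠ 0) {k : ℤ} (hk : (2 : ℝ) ^ (-k) • v ∈ dyadicAnnulus d) :
    ((2 : ℝ) ^ ((k : ℝ) * ν))⁻¹ ≤ (2 * √2) ^ ν * (‖v.1‖ + ‖v.2‖) ^ (-ν) := by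
  have hs : 0 < ‖v.1‖ + ‖v.2‖ := (norm_pos_iff.2 hv).trans_le <| by
    rw [Prod.norm_def]
    exact max_le (le_add_of_nonneg_right (norm_nonneg _)) (le_add_of_nonneg_left (norm_nonneg _))
  have hle : (‖v.1‖ + ‖v.2‖) / (2 * √2) ≤ (2 : ℝ) ^ k := by
    have h := (norm_fst_add_norm_snd_le v).trans (mul_le_mul_of_nonneg_left
      (norm_mem_Icc_of_zpow_neg_smul_mem_dyadicAnnulus hk).2 (Real.sqrt_nonneg 2))
    rw [zpow_add_one₀ (two_ne_zero : (2 : ℝ) ≠ 0)] at h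
    rw [div_le_iff₀ (by positivity)]
    linarith
  calc ((2 : ℝ) ^ ((k : ℝ) * ν))⁻¹ = ((2 : ℝ) ^ k) ^ (-ν) := by
        rw [Real.rpow_neg (by positivity), Real.rpow_mul zero_le_two, Real.rpow_intCast]
    _ ≤ ((‖v.1‖ + ‖v.2‖) / (2 * √2)) ^ (-ν) :=
        Real.rpow_le_rpow_of_nonpos (by positivity) hle (neg_nonpos.2 hν)
    _ = (2 * √2) ^ ν * (‖v.1‖ + ‖v.2‖) ^ (-ν) := by
        rw [Real.div_rpow hs.le (by positivity), Real.rpow_neg hs.le,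
          Real.rpow_neg (by positivity : (0 : ℝ) ≤ 2 * √2), div_inv_eq_mul, mul_comm]

theorem enorm_le_three_mul_of_dyadic_partition {d : ℕ} {Ψ : Euc d × Euc d → ℂ}
    (hΨ : Function.support Ψ ⊆ dyadicAnnulus d) {v : Euc d × Euc d} (hv : v ≠ 0)
    (hsum : ∑' k : ℤ, Ψ ((2 : ℝ) ^ (-k) • v) = 1) (z : ℂ) {B : ℝ≥0∞}
    (hB : ∀ k : ℤ, Ψ ((2 : ℝ) ^ (-k) • v) ≠ 0 → ‖z * Ψ ((2 : ℝ) ^ (-k) • v)‖ₑ ≤ B) :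
    ‖z‖ₑ ≤ 3 * B := by
  have hR : 0 < ‖WithLp.toLp 2 v‖ := by simpa using hv
  set k₀ := Int.log 2 ‖WithLp.toLp 2 v‖
  have hk₀ : (2 : ℝ) ^ k₀ ≤ ‖WithLp.toLp 2 v‖ := Int.zpow_log_le_self one_lt_two hR
  have hk₀' : ‖WithLp.toLp 2 v‖ < (2 : ℝ) ^ (k₀ + 1) := Int.lt_zpow_succ_log_self one_lt_two _
  have hvanish : ∀ k ∉ Finset.Icc (k₀ - 1) (k₀ + 1), z * Ψ ((2 : ℝ) ^ (-k) • v) = 0 := by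
    intro k hk
    by_contra hne
    obtain ⟨hlo, hhi⟩ :=
      norm_mem_Icc_of_zpow_neg_smul_mem_dyadicAnnulus (hΨ (right_ne_zero_of_mul hne))
    have h₁ : k - 1 < k₀ + 1 := (zpow_lt_zpow_iff_right₀ one_lt_two).1 (hlo.trans_lt hk₀')
    have h₂ : k₀ ≤ k + 1 := (zpow_le_zpow_iff_right₀ one_lt_two).1 (hk₀.trans hhi)
    exact hk (Finset.mem_Icc.2 ⟨by omega, by omega⟩)
  calc ‖z‖ₑ = ‖∑' k : ℤ, z * Ψ ((2 : ℝ) ^ (-k) • v)‖ₑ := by rw [tsum_mul_left, hsum, mul_one]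
    _ = ‖∑ k ∈ Finset.Icc (k₀ - 1) (k₀ + 1), z * Ψ ((2 : ℝ) ^ (-k) • v)‖ₑ := by
        rw [tsum_eq_sum hvanish]
    _ ≤ ∑ k ∈ Finset.Icc (k₀ - 1) (k₀ + 1), ‖z * Ψ ((2 : ℝ) ^ (-k) • v)‖ₑ := enorm_sum_le _ _
    _ ≤ ∑ _k ∈ Finset.Icc (k₀ - 1) (k₀ + 1), B := by
        refine Finset.sum_le_sum fun k _ => ?_
        by_cases hk : Ψ ((2 : ℝ) ^ (-k) • v) = 0
        · rw [hk, mul_zero, enorm_zero]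
          exact zero_le
        · exact hB k hk
    _ = 3 * B := by
        rw [Finset.sum_const, Int.card_Icc, show k₀ + 1 + 1 - (k₀ - 1) = 3 by ring, nsmul_eq_mul]
        rfl

section Pieces

variable {d : ℕ} {Ψ m : Euc d × Euc d → ℂ} {ν : ℝ}

theorem tsupport_mPiece_subset (hΨ : Function.support Ψ ⊆ dyadicAnnulus d) (k : ℤ) :
    tsupport (mPiece Ψ m ν k) ⊆ dyadicAnnulus d :=
  closure_minimal ((Function.support_mul_subset_right _ _).trans hΨ)
    (isCompact_dyadicAnnulus d).isClosed

theorem hasCompactSupport_mPiece (hΨ : Function.support Ψ ⊆ dyadicAnnulus d) (k : ℤ) :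
    HasCompactSupport (mPiece Ψ m ν k) :=
  (isCompact_dyadicAnnulus d).of_isClosed_subset (isClosed_tsupport _)
    (tsupport_mPiece_subset hΨ k)

theorem continuous_mPiece (hΨc : Continuous Ψ) (hΨ : Function.support Ψ ⊆ dyadicAnnulus d)
    (hm : ContinuousOn m {0}ᶜ) (k : ℤ) : Continuous (mPiece Ψ m ν k) := by
  refine continuous_of_tsupport fun v hv => ?_
  have hv0 : (2 : ℝ) ^ k • v ≠ 0 := smul_ne_zero (by positivity) fun h =>
    zero_notMem_dyadicAnnulus d (h ▸ tsupport_mPiece_subset hΨ k hv)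
  have hmv : ContinuousAt m ((2 : ℝ) ^ k • v) :=
    hm.continuousAt (isOpen_compl_singleton.mem_nhds hv0)
  exact (continuousAt_const.mul (hmv.comp (continuous_const_smul _).continuousAt)).mul
    hΨc.continuousAt

theorem mul_apply_zpow_neg_smul_eq_mPiece (v : Euc d × Euc d) (k : ℤ) :
    m v * Ψ ((2 : ℝ) ^ (-k) • v) =
      (((2 : ℝ) ^ ((k : ℝ) * ν))⁻¹ : ℝ) * mPiece Ψ m ν k ((2 : ℝ) ^ (-k) • v) := by
  have hv : (2 : ℝ) ^ k • (2 : ℝ) ^ (-k) • v = v := by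
    rw [smul_smul, ← zpow_add₀ two_ne_zero, add_neg_cancel, zpow_zero, one_smul]
  have h2 : (((2 : ℝ) ^ ((k : ℝ) * ν) : ℝ) : ℂ) ≠ 0 := by exact_mod_cast (by positivity)
  rw [mPiece, hv, Complex.ofReal_inv]
  field_simp

theorem enorm_mul_apply_zpow_neg_smul_le (r₁ r₂ : ℝ) (hΨc : Continuous Ψ)
    (hΨ : Function.support Ψ ⊆ dyadicAnnulus d) (hm : ContinuousOn m {0}ᶜ) (hν : 0 ≤ ν)
    {v : Euc d × Euc d} (hv : v ≠ 0) {k : ℤ} (hk : Ψ ((2 : ℝ) ^ (-k) • v) ≠ 0) :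
    ‖m v * Ψ ((2 : ℝ) ^ (-k) • v)‖ₑ ≤
      ENNReal.ofReal ((2 * √2) ^ ν * (‖v.1‖ + ‖v.2‖) ^ (-ν)) *
        (sobolevConst d r₁ r₂ * sobW r₁ r₂ (mPiece Ψ m ν k)) := by
  have hcont := continuous_mPiece (ν := ν) hΨc hΨ hm k
  rw [mul_apply_zpow_neg_smul_eq_mPiece, enorm_mul]
  gcongr
  · rw [← ofReal_norm, Complex.norm_real, Real.norm_of_nonneg (by positivity)]
    exact ENNReal.ofReal_le_ofReal (inv_two_rpow_le_of_smul_mem_dyadicAnnulus hν hv (hΨ hk))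
  · exact enorm_le_sobolevConst_mul_sobW r₁ r₂
      (hcont.integrable_of_hasCompactSupport (hasCompactSupport_mPiece hΨ k)) hcont.continuousAt

end Pieces

theorem statement7_general (n : ℕ) (ν : ℝ) (hν0 : 0 ≤ ν)
    (r : ℝ) (hr : (n : ℝ) / 2 < r)
    (Ψ : SchwartzMap (Euc n × Euc n) ℂ)
    (hΨsupp : Function.support ⇑Ψ ⊆ {ξη : Euc n × Euc n |
      1 / 2 ≤ Real.sqrt (‖ξη.1‖ ^ 2 + ‖ξη.2‖ ^ 2) ∧ Real.sqrt (‖ξη.1‖ ^ 2 + ‖ξη.2‖ ^ 2) ≤ 2})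
    (hΨsum : ∀ ξη : Euc n × Euc n, ξη ≠ 0 → ∑' k : ℤ, Ψ ((2 : ℝ) ^ (-k) • ξη) = 1)
    (m : Euc n × Euc n → ℂ) (hm : ContinuousOn m {(0 : Euc n × Euc n)}ᶜ) :
    ∃ C : ℝ, 0 ≤ C ∧ ∀ ξη : Euc n × Euc n, ξη ≠ 0 →
      (‖m ξη‖₊ : ℝ≥0∞) ≤
        ENNReal.ofReal C * (⨆ k : ℤ, sobW r r (mPiece ⇑Ψ m ν k)) *
          ENNReal.ofReal ((‖ξη.1‖ + ‖ξη.2‖) ^ (-ν)) := by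
  rw [← dyadicAnnulus_eq] at hΨsupp
  set A := ⨆ k : ℤ, sobW r r (mPiece ⇑Ψ m ν k)
  set C := 3 * ENNReal.ofReal ((2 * √2) ^ ν) * sobolevConst n r r
  have hC : C ≠ ⊤ := ENNReal.mul_ne_top (ENNReal.mul_ne_top (by simp) ENNReal.ofReal_ne_top)
    (sobolevConst_ne_top hr hr)
  refine ⟨C.toReal, ENNReal.toReal_nonneg, fun ξη hξη => ?_⟩
  rw [ENNReal.ofReal_toReal hC]
  calc ‖m ξη‖ₑ
      ≤ 3 * (ENNReal.ofReal ((2 * √2) ^ ν * (‖ξη.1‖ + ‖ξη.2‖) ^ (-ν)) *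
          (sobolevConst n r r * A)) := by
        refine enorm_le_three_mul_of_dyadic_partition hΨsupp hξη (hΨsum ξη hξη) _ fun k hk =>
          (enorm_mul_apply_zpow_neg_smul_le r r Ψ.continuous hΨsupp hm hν0 hξη hk).trans ?_
        gcongr
        exact le_iSup (fun k => sobW r r (mPiece ⇑Ψ m ν k)) k
    _ = C * A * ENNReal.ofReal ((‖ξη.1‖ + ‖ξη.2‖) ^ (-ν)) := by
        rw [ENNReal.ofReal_mul (by positivity)]
        ring

/-- The size condition `|m(ξ,η)| ≲ (|ξ|+|η|)^{-ν}` follows from the uniform product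
Sobolev bounds on the dyadic pieces `m_k^ν` (from the proof of Theorem 3.4 of
Hart–Torres–Wu). -/
theorem statement7 (n : ℕ) (hn : 1 ≤ n) (ν : ℝ) (hν0 : 0 ≤ ν)
    (r : ℝ) (hr : (n : ℝ) / 2 < r)
    (Ψ : SchwartzMap (Euc n × Euc n) ℂ)
    (hΨsupp : Function.support ⇑Ψ ⊆ {ξη : Euc n × Euc n |
      1 / 2 ≤ Real.sqrt (‖ξη.1‖ ^ 2 + ‖ξη.2‖ ^ 2) ∧ Real.sqrt (‖ξη.1‖ ^ 2 + ‖ξη.2‖ ^ 2) ≤ 2})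
    (hΨsum : ∀ ξη : Euc n × Euc n, ξη ≠ 0 → ∑' k : ℤ, Ψ ((2 : ℝ) ^ (-k) • ξη) = 1)
    (m : Euc n × Euc n → ℂ) (hm : ContinuousOn m {(0 : Euc n × Euc n)}ᶜ)
    (hA : (⨆ k : ℤ, sobW r r (mPiece ⇑Ψ m ν k)) ≠ ⊤) :
    ∃ C : ℝ, 0 ≤ C ∧ ∀ ξη : Euc n × Euc n, ξη ≠ 0 →
      (‖m ξη‖₊ : ℝ≥0∞) ≤
        ENNReal.ofReal C * (⨆ k : ℤ, sobW r r (mPiece ⇑Ψ m ν k)) *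
          ENNReal.ofReal ((‖ξη.1‖ + ‖ξη.2‖) ^ (-ν)) :=
  statement7_general n ν hν0 r hr Ψ hΨsupp hΨsum m hm
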